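/- Let F_q be a finite field of characteristic p ≥ 5, and for α, λ ∈ F_q define b_{λ,α} = q^{-1/2}(ω_p^{tr((k+α)³ + λ(k+α))})_{k ∈ F_q}. Then for each fixed α, the set B_α = {b_{λ,α} : λ ∈ F_q} is an orthonormal basis of ℂ^q. -/

import Mathlib

/-! The cubic phase of `b_{λ,α}` depends only on `k`, so it cancels in inner products:
`⟪b_{λ,α}, b_{μ,α}⟫ = q⁻¹ ∑ₖ ψ((μ - λ)(k + α))` for the additive character
`ψ = ω_p^{tr(·)}`. Since the trace is nonzero, `ψ` is primitive and this character sum vanishes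
unless `λ = μ`. Thus the `q` vectors are orthonormal in the `q`-dimensional space `ℂ^q`. -/

open scoped InnerProductSpace

/-- The Alltop vector `b_{λ,α} = q^{-1/2} (ω_p^{tr((k+α)³ + λ(k+α))})_{k ∈ F_q}`,
where `ω_p = exp(2πi/p)` and `tr` is the absolute trace from `F_q` to `F_p`. -/
noncomputable def alltop (p : ℕ) (F : Type) [Field F] [Fintype F] [Algebra (ZMod p) F]
    (lam alpha : F) : EuclideanSpace ℂ F :=
  WithLp.toLp 2 fun k => (1 / Real.sqrt (Fintype.card F) : ℂ) *
    Complex.exp (2 * Real.pi * Complex.I *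
      (ZMod.val (Algebra.trace (ZMod p) F ((k + alpha) ^ 3 + lam * (k + alpha))) : ℂ) / p)

theorem Orthonormal.exists_orthonormalBasis_eq {ι 𝕜 E : Type*} [Fintype ι] [RCLike 𝕜]
    [NormedAddCommGroup E] [InnerProductSpace 𝕜 E] [FiniteDimensional 𝕜 E] {v : ι → E}
    (hv : Orthonormal 𝕜 v) (h : Fintype.card ι = Module.finrank 𝕜 E) :
    ∃ B : OrthonormalBasis ι 𝕜 E, ⇑B = v :=
  ⟨.mk hv (hv.linearIndependent.span_eq_top_of_card_eq_finrank' h).ge,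
    OrthonormalBasis.coe_mk _ _⟩

namespace AddChar

variable {R : Type*} [CommRing R] [Fintype R]

noncomputable def chirp (ψ : AddChar R ℂ) (f : R → R) (g : R ≃ R) (lam : R) :
    EuclideanSpace ℂ R :=
  WithLp.toLp 2 fun k => (1 / Real.sqrt (Fintype.card R) : ℂ) * ψ (f k + lam * g k)

theorem inner_chirp (ψ : AddChar R ℂ) (f : R → R) (g : R ≃ R) (lam mu : R) :
    ⟪chirp ψ f g lam, chirp ψ f g mu⟫_ℂ = (Fintype.card R : ℂ)⁻¹ * ∑ x, ψ (x * (mu - lam)) := by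
  have hnorm : (1 / Real.sqrt (Fintype.card R) : ℂ) *
      (starRingEnd ℂ) (1 / Real.sqrt (Fintype.card R) : ℂ) = (Fintype.card R : ℂ)⁻¹ := by
    rw [map_div₀, map_one, Complex.conj_ofReal, div_mul_div_comm, one_mul, ← Complex.ofReal_mul,
      Real.mul_self_sqrt (Nat.cast_nonneg _), Complex.ofReal_natCast, one_div]
  simp only [PiLp.inner_apply, RCLike.inner_apply, chirp, map_mul, ← map_neg_eq_conj]
  rw [← g.sum_comp fun x => ψ (x * (mu - lam)), Finset.mul_sum]
  refine Finset.sum_congr rfl fun k _ => ?_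
  rw [mul_mul_mul_comm, hnorm, ← map_add_eq_mul]
  congr 2
  ring

theorem orthonormal_chirp {ψ : AddChar R ℂ} (hψ : ψ.IsPrimitive) (f : R → R) (g : R ≃ R) :
    Orthonormal ℂ (chirp ψ f g) := by
  classical
  refine orthonormal_iff_ite.mpr fun lam mu => ?_
  rw [inner_chirp, sum_mulShift _ hψ, sub_eq_zero, eq_comm (a := mu)]
  split_ifs <;> simp

end AddChar

noncomputable def traceAddChar (p : ℕ) [Fact p.Prime] (F : Type*) [Field F]
    [Algebra (ZMod p) F] : AddChar F ℂ :=
  ZMod.stdAddChar.compAddMonoidHom (Algebra.trace (ZMod p) F).toAddMonoidHom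

theorem isPrimitive_traceAddChar (p : ℕ) [Fact p.Prime] (F : Type*) [Field F] [Finite F]
    [Algebra (ZMod p) F] : (traceAddChar p F).IsPrimitive := by
  refine AddChar.IsPrimitive.of_ne_one fun h => ?_
  obtain ⟨x, hx⟩ : ∃ x, Algebra.trace (ZMod p) F x ≠ 0 := by
    by_contra! h0
    exact Algebra.trace_ne_zero (ZMod p) F (LinearMap.ext h0)
  refine hx <| ZMod.injective_stdAddChar ?_
  rw [AddChar.map_zero_eq_one]
  exact DFunLike.congr_fun h x

theorem alltop_eq_chirp (p : ℕ) [Fact p.Prime] (F : Type) [Field F] [Fintype F]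
    [Algebra (ZMod p) F] (lam alpha : F) :
    alltop p F lam alpha =
      (traceAddChar p F).chirp (fun k => (k + alpha) ^ 3) (Equiv.addRight alpha) lam := by
  ext k
  simp [AddChar.chirp, traceAddChar, alltop, ZMod.stdAddChar_apply, ZMod.toCircle_apply]

theorem alltop_orthonormal_basis_general (p : ℕ) [Fact p.Prime]
    (F : Type) [Field F] [Fintype F] [Algebra (ZMod p) F] (alpha : F) :
    ∃ B : OrthonormalBasis F ℂ (EuclideanSpace ℂ F),
      ∀ lam : F, B lam = alltop p F lam alpha := by
  obtain ⟨B, hB⟩ := (AddChar.orthonormal_chirp (isPrimitive_traceAddChar p F)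
    (fun k => (k + alpha) ^ 3) (Equiv.addRight alpha)).exists_orthonormalBasis_eq
    (finrank_euclideanSpace).symm
  exact ⟨B, fun lam => by rw [hB, alltop_eq_chirp]⟩

/-- For `F_q` of characteristic `p ≥ 5` and each fixed `α`, the set
`B_α = {b_{λ,α} : λ ∈ F_q}` is an orthonormal basis of `ℂ^q`. -/
theorem alltop_orthonormal_basis (p : ℕ) [Fact p.Prime] (hp : 5 ≤ p)
    (F : Type) [Field F] [Fintype F] [Algebra (ZMod p) F] (alpha : F) :
    ∃ B : OrthonormalBasis F ℂ (EuclideanSpace ℂ F),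
      ∀ lam : F, B lam = alltop p F lam alpha :=
  alltop_orthonormal_basis_general p F alpha
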